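/- Let 𝔐 be the set of circuits of a loopless matroid without parallel elements on S and let 𝔐̄ be its Gröbner circuits. In the exterior algebra E over R on generators e_s (s ∈ S), the elements ∂e_J := Σ_{ν=1}^{#J} (−1)^{ν−1} e_{J∖{j_ν}} for J ∈ 𝔐 ∩ 𝔐̄ generate the same ideal as the elements ∂e_J for all J ∈ 𝔐 (the defining ideal of the Orlik–Solomon algebra). -/

import Mathlib

/-- A circuit of a matroid: a minimal dependent set. -/
def IsCircuit {S : Type*} (M : Matroid S) (C : Finset S) : Prop :=
  M.Dep ↑C ∧ ∀ D : Finset S, D ⊂ C → ¬ M.Dep ↑D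

/-- Strict degree-lexicographic order on finsets. -/
def dlexLT {S : Type*} [LinearOrder S] (K J : Finset S) : Prop :=
  K.card < J.card ∨ (K.card = J.card ∧ ∃ m ∈ K, m ∉ J ∧ ∀ x ∈ J, x ∉ K → m < x)

/-- `K ⊑ J`: `K` is a convex subset of `J`. -/
def convexIn {S : Type*} [LinearOrder S] (K J : Finset S) : Prop :=
  K ⊆ J ∧ ∀ j ∈ J, (∃ k ∈ K, k < j) → (∃ k' ∈ K, j < k') → j ∈ K

/-- `J` with its least element removed. -/
def eraseMin {S : Type*} [LinearOrder S] (J : Finset S) : Finset S :=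
  J.filter fun x => ∃ y ∈ J, y < x

/-- The defining fixpoint property of the set of Gröbner circuits `𝔐̄`. -/
def IsGroebnerCircuitSet {S : Type*} [LinearOrder S] (M : Matroid S)
    (Mbar : Set (Finset S)) : Prop :=
  ∀ J : Finset S, J ∈ Mbar ↔
    (M.Dep ↑J ∧ ∀ K ∈ Mbar, dlexLT K J → ¬ convexIn (eraseMin K) (eraseMin J))

/-- The monomial `e_J = e_{j_1} ∧ ⋯ ∧ e_{j_{#J}}` in the exterior algebra on the free
module `S →₀ R`. -/
noncomputable def eMon (R : Type*) [CommRing R] {S : Type*} [LinearOrder S] (J : Finset S) :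
    ExteriorAlgebra R (S →₀ R) :=
  ((J.sort (· ≤ ·)).map fun s => ExteriorAlgebra.ι R (Finsupp.single s (1 : R))).prod

/-- `∂e_J = Σ_ν (-1)^{ν-1} e_{J ∖ {j_ν}}`. -/
noncomputable def bnd (R : Type*) [CommRing R] {S : Type*} [LinearOrder S] (J : Finset S) :
    ExteriorAlgebra R (S →₀ R) :=
  ∑ j ∈ J, ((-1 : R) ^ (J.filter (· < j)).card) • eMon R (J.erase j)

/-!
The boundary `∂` is contraction with the linear form `e_s ↦ 1`: an antiderivation with `∂² = 0`,
so `∂(y x)` lies in a two-sided ideal `I` whenever `x` and `∂x` do. Let `I` be generated by the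
`∂e_C` with `C ∈ 𝔐 ∩ 𝔐̄`; we show `∂e_J ∈ I` for every dependent `J`, by induction on the dlex order.
If `J` properly contains a circuit `C`, take `x = e_C = e_{min C} ∂e_C`. If `J` is a circuit not in
`𝔐̄`, the Gröbner condition provides a dlex-smaller `K ∈ 𝔐̄` with `K' = K ∖ {min K} ⊆ J`; taking
`x = ∂e_K`, the element `∂(e_{J ∖ K'} ∂e_K)` is `± ∂e_J` plus boundaries of the exchanged sets
`(J ∖ {k}) ∪ {min K}`, `k ∈ K'`, which are dependent by circuit elimination and dlex-smaller
than `J`.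
-/

open Finset

namespace OrlikSolomon

section ExteriorAlgebra

variable {S : Type*} (R : Type*) [CommRing R]

noncomputable def gen (s : S) : ExteriorAlgebra R (S →₀ R) :=
  ExteriorAlgebra.ι R (Finsupp.single s 1)

noncomputable def listMon (ℓ : List S) : ExteriorAlgebra R (S →₀ R) :=
  (ℓ.map (gen R)).prod

noncomputable def boundary : ExteriorAlgebra R (S →₀ R) →ₗ[R] ExteriorAlgebra R (S →₀ R) :=
  CliffordAlgebra.contractLeft (Finsupp.linearCombination R fun _ => 1)

variable {R}

lemma gen_mul_self (a : S) : gen R a * gen R a = 0 := ExteriorAlgebra.ι_sq_zero _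

lemma gen_mul_gen_comm (a b : S) : gen R a * gen R b = -(gen R b * gen R a) :=
  eq_neg_of_add_eq_zero_left (ExteriorAlgebra.ι_add_mul_swap _ _)

lemma listMon_cons (a : S) (ℓ : List S) : listMon R (a :: ℓ) = gen R a * listMon R ℓ := by
  simp [listMon]

lemma listMon_append (ℓ₁ ℓ₂ : List S) :
    listMon R (ℓ₁ ++ ℓ₂) = listMon R ℓ₁ * listMon R ℓ₂ := by
  simp [listMon]

lemma listMon_perm {ℓ₁ ℓ₂ : List S} (h : ℓ₁.Perm ℓ₂) :
    ∃ n : ℕ, listMon R ℓ₁ = (-1 : R) ^ n • listMon R ℓ₂ := by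
  induction h with
  | nil => exact ⟨0, by simp⟩
  | cons a _ ih =>
    obtain ⟨n, hn⟩ := ih
    exact ⟨n, by rw [listMon_cons, listMon_cons, hn, mul_smul_comm]⟩
  | swap a b ℓ =>
    refine ⟨1, ?_⟩
    simp only [listMon_cons, ← mul_assoc, gen_mul_gen_comm b a, pow_one, neg_one_smul, neg_mul]
  | trans _ _ ih₁ ih₂ =>
    obtain ⟨m, hm⟩ := ih₁
    obtain ⟨n, hn⟩ := ih₂
    exact ⟨m + n, by rw [hm, hn, smul_smul, pow_add]⟩

lemma gen_mul_listMon_of_mem {a : S} {ℓ : List S} (h : a ∈ ℓ) : gen R a * listMon R ℓ = 0 := by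
  obtain ⟨s, t, rfl⟩ := List.append_of_mem h
  obtain ⟨n, hn⟩ := listMon_perm (R := R) (List.perm_middle (a := a) (l₁ := s) (l₂ := t))
  rw [hn, listMon_cons, mul_smul_comm, ← mul_assoc, gen_mul_self, zero_mul, smul_zero]

lemma listMon_eq_zero_of_not_nodup {ℓ : List S} (h : ¬ ℓ.Nodup) : listMon R ℓ = 0 := by
  induction ℓ with
  | nil => simp at h
  | cons a ℓ ih =>
    rw [List.nodup_cons, not_and_or, not_not] at h
    rcases h with h | h
    · rw [listMon_cons, gen_mul_listMon_of_mem h]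
    · rw [listMon_cons, ih h, mul_zero]

lemma boundary_gen_mul (a : S) (x : ExteriorAlgebra R (S →₀ R)) :
    boundary R (gen R a * x) = x - gen R a * boundary R x := by
  simp [boundary, gen, CliffordAlgebra.contractLeft_ι_mul]

lemma boundary_boundary (x : ExteriorAlgebra R (S →₀ R)) : boundary R (boundary R x) = 0 :=
  CliffordAlgebra.contractLeft_contractLeft _ x

lemma boundary_mul (x y : ExteriorAlgebra R (S →₀ R)) :
    boundary R (x * y) = boundary R x * y + CliffordAlgebra.involute x * boundary R y := by
  induction x using CliffordAlgebra.induction generalizing y with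
  | algebraMap r =>
    simp only [boundary, CliffordAlgebra.contractLeft_algebraMap, zero_mul, zero_add,
      AlgHom.commutes, ← Algebra.smul_def, map_smul]
  | ι m =>
    simp only [boundary, CliffordAlgebra.contractLeft_ι_mul, CliffordAlgebra.involute_ι,
      CliffordAlgebra.contractLeft_ι, ← Algebra.smul_def, neg_mul, sub_eq_add_neg]
  | mul a b ha hb =>
    rw [mul_assoc, ha, hb, ha b, map_mul]
    noncomm_ring
  | add a b ha hb =>
    rw [add_mul, map_add, map_add, map_add, add_mul, add_mul, ha, hb]
    abel

variable [LinearOrder S]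

lemma eMon_eq_listMon (J : Finset S) : eMon R J = listMon R (J.sort (· ≤ ·)) := rfl

lemma eMon_mul_eMon_of_disjoint {A B : Finset S} (h : Disjoint A B) :
    ∃ n : ℕ, eMon R A * eMon R B = (-1 : R) ^ n • eMon R (A ∪ B) := by
  rw [eMon_eq_listMon, eMon_eq_listMon, eMon_eq_listMon, ← listMon_append]
  refine listMon_perm (List.perm_of_nodup_nodup_toFinset_eq ?_ (sort_nodup _ _) ?_)
  · exact List.nodup_append.mpr ⟨sort_nodup _ _, sort_nodup _ _, fun a ha b hb hab =>
      disjoint_left.mp h ((mem_sort _).mp ha) (hab ▸ (mem_sort _).mp hb)⟩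
  · simp only [List.toFinset_append, sort_toFinset]

lemma eMon_mul_eMon_of_not_disjoint {A B : Finset S} (h : ¬ Disjoint A B) :
    eMon R A * eMon R B = 0 := by
  rw [eMon_eq_listMon, eMon_eq_listMon, ← listMon_append]
  refine listMon_eq_zero_of_not_nodup fun hnd => h (disjoint_left.mpr fun a ha hb => ?_)
  exact List.disjoint_of_nodup_append hnd ((mem_sort _).mpr ha) ((mem_sort _).mpr hb)

lemma eMon_insert_of_forall_lt {a : S} {s : Finset S} (h : ∀ x ∈ s, a < x) :
    eMon R (insert a s) = gen R a * eMon R s := by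
  rw [eMon_eq_listMon, sort_insert _ (fun x hx => (h x hx).le) fun ha => lt_irrefl a (h a ha),
    listMon_cons, eMon_eq_listMon]

lemma bnd_insert_of_forall_lt {a : S} {s : Finset S} (h : ∀ x ∈ s, a < x) :
    bnd R (insert a s) = eMon R s - gen R a * bnd R s := by
  have ha : a ∉ s := fun ha => lt_irrefl a (h a ha)
  have hfirst : (insert a s).filter (· < a) = ∅ :=
    filter_eq_empty_iff.mpr fun x hx => not_lt.mpr <| by
      rcases mem_insert.mp hx with rfl | hx
      exacts [le_rfl, (h x hx).le]
  have hrest : ∀ j ∈ s, (insert a s).filter (· < j) = insert a (s.filter (· < j)) := by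
    intro j hj
    rw [filter_insert, if_pos (h j hj)]
  rw [bnd, sum_insert ha, hfirst, card_empty, pow_zero, one_smul, erase_insert ha, bnd,
    mul_sum, sub_eq_add_neg, ← sum_neg_distrib]
  congr 1
  refine sum_congr rfl fun j hj => ?_
  have haj : a ≠ j := (h j hj).ne
  rw [hrest j hj, card_insert_of_notMem (by simp [ha]), pow_succ, mul_neg_one, neg_smul,
    erase_insert_of_ne haj, eMon_insert_of_forall_lt fun x hx => h x (mem_of_mem_erase hx),
    mul_smul_comm]

lemma gen_mul_bnd_insert_of_forall_lt {a : S} {s : Finset S} (h : ∀ x ∈ s, a < x) :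
    gen R a * bnd R (insert a s) = eMon R (insert a s) := by
  rw [bnd_insert_of_forall_lt h, mul_sub, ← mul_assoc, gen_mul_self, zero_mul, sub_zero,
    eMon_insert_of_forall_lt h]

lemma eMon_eq_gen_min'_mul_bnd {J : Finset S} (hJ : J.Nonempty) :
    eMon R J = gen R (J.min' hJ) * bnd R J := by
  have h : ∀ x ∈ J.erase (J.min' hJ), J.min' hJ < x := fun x hx =>
    J.min'_lt_of_mem_erase_min' hJ hx
  have ha := J.min'_mem hJ
  generalize J.min' hJ = a at h ha ⊢
  rw [← insert_erase ha]
  exact (gen_mul_bnd_insert_of_forall_lt h).symm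

lemma boundary_eMon (J : Finset S) : boundary R (eMon R J) = bnd R J := by
  induction J using induction_on_min with
  | empty => simp [eMon, bnd, boundary]
  | insert a s h ih =>
    rw [eMon_insert_of_forall_lt h, boundary_gen_mul, ih, bnd_insert_of_forall_lt h]

lemma boundary_bnd (J : Finset S) : boundary R (bnd R J) = 0 := by
  rw [← boundary_eMon, boundary_boundary]

end ExteriorAlgebra

section Ideal

section Algebra

variable {R A : Type*} [CommRing R] [Ring A] [Algebra R A] {I : TwoSidedIdeal A}

lemma smul_mem_of_mem (r : R) {x : A} (hx : x ∈ I) : r • x ∈ I := by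
  rw [Algebra.smul_def]
  exact I.mul_mem_left _ _ hx

lemma mem_of_neg_one_pow_smul_mem {n : ℕ} {x : A} (hx : (-1 : R) ^ n • x ∈ I) : x ∈ I := by
  simpa [smul_smul, ← pow_add, ← two_mul, pow_mul] using smul_mem_of_mem ((-1 : R) ^ n) hx

end Algebra

variable {S : Type*} {R : Type*} [CommRing R] {I : TwoSidedIdeal (ExteriorAlgebra R (S →₀ R))}

lemma boundary_mul_mem {x : ExteriorAlgebra R (S →₀ R)} (hx : x ∈ I) (hdx : boundary R x ∈ I)
    (y : ExteriorAlgebra R (S →₀ R)) : boundary R (y * x) ∈ I := by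
  rw [boundary_mul]
  exact I.add_mem (I.mul_mem_left _ _ hx) (I.mul_mem_left _ _ hdx)

variable [LinearOrder S]

lemma bnd_mem_of_subset {C J : Finset S} (hC : C.Nonempty) (hCJ : C ⊆ J) (h : bnd R C ∈ I) :
    bnd R J ∈ I := by
  obtain ⟨n, hn⟩ := eMon_mul_eMon_of_disjoint (R := R) (sdiff_disjoint : Disjoint (J \ C) C)
  have heC : eMon R C ∈ I := by
    rw [eMon_eq_gen_min'_mul_bnd hC]
    exact I.mul_mem_left _ _ h
  have hmem := boundary_mul_mem heC (by rwa [boundary_eMon]) (eMon R (J \ C))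
  rw [hn, sdiff_union_of_subset hCJ, map_smul, boundary_eMon] at hmem
  exact mem_of_neg_one_pow_smul_mem hmem

lemma bnd_mem_of_erase_subset {K J : Finset S} {k₀ : S} (hk₀ : k₀ ∈ K) (hKJ : K.erase k₀ ⊆ J)
    (hK : bnd R K ∈ I) (h : ∀ k ∈ K.erase k₀, k₀ ∉ J → bnd R (insert k₀ (J.erase k)) ∈ I) :
    bnd R J ∈ I := by
  set A := J \ K.erase k₀
  have hz : boundary R (eMon R A * bnd R K) ∈ I :=
    boundary_mul_mem hK (by rw [boundary_bnd]; exact I.zero_mem) _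
  have hterm : ∀ k ∈ K.erase k₀, boundary R (eMon R A * eMon R (K.erase k)) ∈ I := by
    intro k hk
    by_cases hd : Disjoint A (K.erase k)
    · obtain ⟨n, hn⟩ := eMon_mul_eMon_of_disjoint (R := R) hd
      have hk₀J : k₀ ∉ J := fun hk₀J => disjoint_left.mp hd
        (mem_sdiff.mpr ⟨hk₀J, notMem_erase _ _⟩) (mem_erase.mpr ⟨(ne_of_mem_erase hk).symm, hk₀⟩)
      have hunion : A ∪ K.erase k = insert k₀ (J.erase k) := by
        have hk' := mem_erase.mp hk
        ext x
        have hxJ := @hKJ x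
        simp only [A, mem_union, mem_sdiff, mem_erase, mem_insert] at hxJ hk' ⊢
        grind
      rw [hn, map_smul, boundary_eMon, hunion]
      exact smul_mem_of_mem _ (h k hk hk₀J)
    · rw [eMon_mul_eMon_of_not_disjoint hd, map_zero]
      exact I.zero_mem
  obtain ⟨n, hn⟩ := eMon_mul_eMon_of_disjoint (R := R) (sdiff_disjoint : Disjoint A (K.erase k₀))
  rw [sdiff_union_of_subset hKJ] at hn
  have hexpand : boundary R (eMon R A * bnd R K) =
      (-1 : R) ^ (#(K.filter (· < k₀)) + n) • bnd R J + ∑ k ∈ K.erase k₀,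
        (-1 : R) ^ #(K.filter (· < k)) • boundary R (eMon R A * eMon R (K.erase k)) := by
    rw [bnd, mul_sum, map_sum, ← add_sum_erase _ _ hk₀]
    simp only [mul_smul_comm, map_smul]
    rw [hn, map_smul, boundary_eMon, smul_smul, pow_add]
  refine mem_of_neg_one_pow_smul_mem (eq_sub_of_add_eq hexpand.symm ▸ I.sub_mem hz ?_)
  exact sum_mem fun k hk => smul_mem_of_mem _ (hterm k hk)

end Ideal

section Matroid

variable {S : Type*} {M : Matroid S}

lemma isCircuit_of_isCircuit_coe {C : Finset S} (h : M.IsCircuit ↑C) : IsCircuit M C :=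
  ⟨h.dep, fun _ hDC => ((Matroid.isCircuit_iff_forall_ssubset.mp h).2 (coe_ssubset.mpr hDC)).not_dep⟩

lemma exists_isCircuit_subset_of_dep {J : Finset S} (hJ : M.Dep ↑J) :
    ∃ C ⊆ J, M.IsCircuit ↑C := by
  obtain ⟨C, hCJ, hC⟩ := hJ.exists_isCircuit_subset
  lift C to Finset S using J.finite_toSet.subset hCJ
  exact ⟨C, coe_subset.mp hCJ, hC⟩

/-- Circuit elimination between `J` and a circuit inside `K`; the cardinality bound rules out that
this circuit is `J` itself. -/
lemma dep_insert_erase [DecidableEq S] {J K : Finset S} {k₀ : S} (k : S) (hJ : M.IsCircuit ↑J)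
    (hK : M.Dep ↑K) (hk₀K : k₀ ∈ K) (hk₀J : k₀ ∉ J) (hKJ : K.erase k₀ ⊆ J)
    (hcard : #K ≤ #J) : M.Dep ↑(insert k₀ (J.erase k)) := by
  obtain ⟨C, hCK, hC⟩ := exists_isCircuit_subset_of_dep hK
  have hCJ : (C : Set S) ≠ J := by
    rw [Ne, coe_inj]
    rintro rfl
    exact (card_lt_card (ssubset_of_subset_of_ne hCK (by rintro rfl; exact hk₀J hk₀K))).not_ge hcard
  obtain ⟨C', hC'sub, hC'⟩ := hC.elimination hJ hCJ k
  refine hC'.dep.superset (hC'sub.trans ?_) ?_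
  · intro x ⟨hx, hxk⟩
    have hxJ := @hKJ x
    simp only [Set.mem_union, mem_coe, coe_insert, coe_erase, Set.mem_insert_iff, Set.mem_sdiff,
      Set.mem_singleton_iff, mem_erase] at hx hxk hxJ ⊢
    grind
  · rw [coe_insert, coe_erase]
    exact Set.insert_subset (hK.subset_ground hk₀K) (Set.sdiff_subset.trans hJ.subset_ground)

end Matroid

section Dlex

variable {S : Type*} [LinearOrder S]

lemma dlexLT_irrefl (J : Finset S) : ¬ dlexLT J J := by
  rintro (h | ⟨-, m, hm, hm', -⟩)
  · exact lt_irrefl _ h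
  · exact hm' hm

lemma dlexLT_trans {K J L : Finset S} (hKJ : dlexLT K J) (hJL : dlexLT J L) : dlexLT K L := by
  rcases hKJ with hKJ | ⟨hKJ, a, haK, haJ, ha⟩
  · rcases hJL with hJL | ⟨hJL, -⟩
    exacts [Or.inl (hKJ.trans hJL), Or.inl (hJL ▸ hKJ)]
  rcases hJL with hJL | ⟨hJL, b, hbJ, hbL, hb⟩
  · exact Or.inl (hKJ ▸ hJL)
  refine Or.inr ⟨hKJ.trans hJL, ?_⟩
  rcases lt_or_gt_of_ne (ne_of_mem_of_not_mem hbJ haJ).symm with hab | hba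
  · refine ⟨a, haK, fun haL => (hb a haL haJ).not_gt hab, fun x hxL hxK => ?_⟩
    by_cases hxJ : x ∈ J
    exacts [ha x hxJ hxK, hab.trans (hb x hxL hxJ)]
  · have hbK : b ∈ K := by_contra fun hbK => (ha b hbJ hbK).not_gt hba
    refine ⟨b, hbK, hbL, fun x hxL hxK => ?_⟩
    by_cases hxJ : x ∈ J
    exacts [hba.trans (ha x hxJ hxK), hb x hxL hxJ]

lemma dlexLT_wellFounded [Finite S] : WellFounded (dlexLT (S := S)) :=
  haveI : IsTrans (Finset S) dlexLT := ⟨fun _ _ _ => dlexLT_trans⟩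
  haveI : Std.Irrefl (dlexLT (S := S)) := ⟨dlexLT_irrefl⟩
  Finite.wellFounded_of_trans_of_irrefl _

lemma card_le_of_dlexLT {K J : Finset S} (h : dlexLT K J) : #K ≤ #J :=
  h.elim le_of_lt fun h => h.1.le

lemma dlexLT_of_ssubset {K J : Finset S} (h : K ⊂ J) : dlexLT K J :=
  Or.inl (card_lt_card h)

lemma dlexLT_insert_erase {J : Finset S} {a b : S} (ha : a ∉ J) (hb : b ∈ J) (hab : a < b) :
    dlexLT (insert a (J.erase b)) J := by
  refine Or.inr ⟨?_, a, mem_insert_self _ _, ha, fun x hxJ hx => ?_⟩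
  · rw [card_insert_of_notMem fun h => ha (mem_of_mem_erase h), card_erase_add_one hb]
  · obtain rfl : x = b := by_contra fun hxb => hx (mem_insert_of_mem (mem_erase.mpr ⟨hxb, hxJ⟩))
    exact hab

lemma eraseMin_eq_erase_min' {J : Finset S} (hJ : J.Nonempty) :
    eraseMin J = J.erase (J.min' hJ) := by
  ext x
  simp only [eraseMin, mem_filter, mem_erase]
  refine ⟨fun ⟨hx, y, hy, hyx⟩ => ⟨(J.min'_le y hy).trans_lt hyx |>.ne', hx⟩,
    fun ⟨hne, hx⟩ => ⟨hx, J.min' hJ, J.min'_mem hJ, (J.min'_le x hx).lt_of_ne' hne⟩⟩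

end Dlex

section Main

variable {S : Type*} [Finite S] [LinearOrder S] {R : Type*} [CommRing R] {M : Matroid S}
  {Mbar : Set (Finset S)}

theorem bnd_mem_span_of_dep (hMbar : IsGroebnerCircuitSet M Mbar) {J : Finset S}
    (hJ : M.Dep ↑J) :
    bnd R J ∈ TwoSidedIdeal.span {x : ExteriorAlgebra R (S →₀ R) |
        ∃ C : Finset S, IsCircuit M C ∧ C ∈ Mbar ∧ x = bnd R C} := by
  induction J using WellFounded.induction (dlexLT_wellFounded (S := S)) with
  | h J ih =>
  obtain ⟨C, hCJ, hC⟩ := exists_isCircuit_subset_of_dep hJ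
  obtain hCJ | rfl := hCJ.ssubset_or_eq
  · exact bnd_mem_of_subset (coe_nonempty.mp hC.dep.nonempty) hCJ.subset
      (ih C (dlexLT_of_ssubset hCJ) hC.dep)
  by_cases hCbar : C ∈ Mbar
  · exact TwoSidedIdeal.subset_span ⟨C, isCircuit_of_isCircuit_coe hC, hCbar, rfl⟩
  obtain ⟨K, hKbar, hKC, hconv⟩ :
      ∃ K ∈ Mbar, dlexLT K C ∧ convexIn (eraseMin K) (eraseMin C) := by
    simpa [hJ] using mt (hMbar C).mpr hCbar
  have hK : M.Dep ↑K := ((hMbar K).mp hKbar).1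
  have hKne : K.Nonempty := coe_nonempty.mp hK.nonempty
  have hKC' : K.erase (K.min' hKne) ⊆ C :=
    eraseMin_eq_erase_min' hKne ▸ hconv.1.trans (filter_subset _ _)
  refine bnd_mem_of_erase_subset (K.min'_mem hKne) hKC' (ih K hKC hK) fun k hk hk₀C => ?_
  exact ih _ (dlexLT_insert_erase hk₀C (hKC' hk) (K.min'_lt_of_mem_erase_min' hKne hk))
    (dep_insert_erase k hC hK (K.min'_mem hKne) hk₀C hKC' (card_le_of_dlexLT hKC))

end Main

end OrlikSolomon

theorem stmt17_general {S : Type*} [Fintype S] [LinearOrder S] {R : Type*} [CommRing R]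
    (M : Matroid S) (Mbar : Set (Finset S)) (hMbar : IsGroebnerCircuitSet M Mbar) :
    TwoSidedIdeal.span {x : ExteriorAlgebra R (S →₀ R) |
        ∃ J : Finset S, IsCircuit M J ∧ J ∈ Mbar ∧ x = bnd R J} =
      TwoSidedIdeal.span {x : ExteriorAlgebra R (S →₀ R) |
        ∃ J : Finset S, IsCircuit M J ∧ x = bnd R J} := by
  refine le_antisymm (TwoSidedIdeal.span_mono ?_) (TwoSidedIdeal.span_le.mpr ?_)
  · rintro _ ⟨J, hJ, -, rfl⟩
    exact ⟨J, hJ, rfl⟩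
  · rintro _ ⟨J, hJ, rfl⟩
    exact OrlikSolomon.bnd_mem_span_of_dep hMbar hJ.1

theorem stmt17 {S : Type*} [Fintype S] [LinearOrder S] {R : Type*} [CommRing R]
    (M : Matroid S) (hE : M.E = Set.univ)
    (hloop : ∀ C : Finset S, IsCircuit M C → 2 < C.card)
    (Mbar : Set (Finset S)) (hMbar : IsGroebnerCircuitSet M Mbar) :
    TwoSidedIdeal.span {x : ExteriorAlgebra R (S →₀ R) |
        ∃ J : Finset S, IsCircuit M J ∧ J ∈ Mbar ∧ x = bnd R J} =
      TwoSidedIdeal.span {x : ExteriorAlgebra R (S →₀ R) |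
        ∃ J : Finset S, IsCircuit M J ∧ x = bnd R J} :=
  stmt17_general M Mbar hMbar
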